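/- arXiv:2401.00378 — 2 statements merged into one kernel-verified Lean document; each statement's English description precedes it below -/
import Mathlib

section
/- The following are equivalent: (i) m¹ is a reversible measure for q; (ii) m¹ is a †-reversible measure for q̂; (iii) m² is a †-reversible measure for Q. -/
open MeasureTheory ProbabilityTheory Set Pointwise
open scoped ENNReal

noncomputable section

/-- The increasing affine map from `(-1,1)` onto the chord `E_u`. -/
def ellMap (γ u x : ℝ) : ℝ := -u * Real.cos γ + x * Real.sqrt (1 - u ^ 2 * Real.sin γ ^ 2)

/-- The inverse of `ellMap γ u`. -/
def ellInv (γ u y : ℝ) : ℝ := (y + u * Real.cos γ) / Real.sqrt (1 - u ^ 2 * Real.sin γ ^ 2)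

/-- The open elliptical region `E`. -/
def Eset (γ : ℝ) : Set (ℝ × ℝ) :=
  {p | p.1 ^ 2 + 2 * Real.cos γ * p.1 * p.2 + p.2 ^ 2 < 1}

/-- The state space `E* = E × {−1,1}`, realized inside `ℝ × ℝ × ℝ`. -/
def EstarSet (γ : ℝ) : Set (ℝ × ℝ × ℝ) :=
  {w | (w.1, w.2.1) ∈ Eset γ ∧ (w.2.2 = 1 ∨ w.2.2 = -1)}

/-- Uniform probability measure on `(-1,1)`. -/
def m1 : Measure ℝ := (2 : ℝ≥0∞)⁻¹ • volume.restrict (Ioo (-1 : ℝ) 1)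

/-- The probability measure `m²` on `E*`: normalized Lebesgue measure on `E` times
uniform measure on `{−1,1}`. -/
def m2 (γ : ℝ) : Measure (ℝ × ℝ × ℝ) :=
  ((((volume (Eset γ))⁻¹ • volume.restrict (Eset γ)).prod
      ((2 : ℝ≥0∞)⁻¹ • (Measure.dirac (1 : ℝ) + Measure.dirac (-1 : ℝ)))).map
    fun p => (p.1.1, p.1.2, p.2))

/-- `q` is a Markov kernel on `(-1,1)`. -/
def IsMarkovOnInterval (q : Kernel ℝ ℝ) : Prop :=
  IsMarkovKernel q ∧ ∀ x ∈ Ioo (-1 : ℝ) 1, q x (Ioo (-1 : ℝ) 1) = 1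

/-- The kernel `Q` of the alternating random walk, as a measure-valued function on the
state space. -/
def Qfun (γ : ℝ) (q : Kernel ℝ ℝ) : ℝ × ℝ × ℝ → Measure (ℝ × ℝ × ℝ) := fun w =>
  if w.2.2 = -1 then
    Measure.map (fun x => (ellMap γ w.2.1 x, w.2.1, (1 : ℝ))) (q (-ellInv γ w.2.1 w.1))
  else
    Measure.map (fun x => (w.1, ellMap γ w.1 x, (-1 : ℝ))) (q (-ellInv γ w.1 w.2.1))

/-- The kernel `Q†`. -/
def Qdag (γ : ℝ) (q : Kernel ℝ ℝ) : ℝ × ℝ × ℝ → Measure (ℝ × ℝ × ℝ) := fun w =>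
  if w.2.2 = 1 then
    Measure.map (fun x => (ellMap γ w.2.1 x, w.2.1, (-1 : ℝ)))
      ((q (ellInv γ w.2.1 w.1)).map (fun y => -y))
  else
    Measure.map (fun x => (w.1, ellMap γ w.1 x, (1 : ℝ)))
      ((q (ellInv γ w.1 w.2.1)).map (fun y => -y))

/-- Bounded continuous real-valued functions on a subset `S`. -/
def BddCtsOn {X : Type*} [TopologicalSpace X] (S : Set X) (f : X → ℝ) : Prop :=
  ContinuousOn f S ∧ ∃ C, ∀ x ∈ S, |f x| ≤ C

/-- `m¹` is a reversible measure for `q`. -/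
def Reversible1 (q : Kernel ℝ ℝ) : Prop :=
  ∀ j k : ℝ → ℝ, BddCtsOn (Ioo (-1 : ℝ) 1) j → BddCtsOn (Ioo (-1 : ℝ) 1) k →
    ∫ x, k x * ∫ y, j y ∂(q x) ∂m1 = ∫ x, j x * ∫ y, k y ∂(q x) ∂m1

/-- The `†`-operation on measure-valued functions on `(-1,1)`: `p†(x,A) := p(−x,−A)`. -/
def dag (p : ℝ → Measure ℝ) : ℝ → Measure ℝ := fun x => (p (-x)).map (fun y => -y)

/-- `m¹` is a `†`-reversible measure for `p`. -/
def DagReversible1 (p : ℝ → Measure ℝ) : Prop :=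
  ∀ j k : ℝ → ℝ, BddCtsOn (Ioo (-1 : ℝ) 1) j → BddCtsOn (Ioo (-1 : ℝ) 1) k →
    ∫ x, k x * ∫ y, j y ∂(p x) ∂m1 = ∫ x, j x * ∫ y, k y ∂(dag p x) ∂m1

/-- `m²` is a `†`-reversible measure for `Q`. -/
def DagReversible2 (γ : ℝ) (q : Kernel ℝ ℝ) : Prop :=
  ∀ f g : ℝ × ℝ × ℝ → ℝ, BddCtsOn (EstarSet γ) f → BddCtsOn (EstarSet γ) g →
    ∫ w, g w * ∫ w', f w' ∂(Qfun γ q w) ∂(m2 γ) =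
      ∫ w, f w * ∫ w', g w' ∂(Qdag γ q w) ∂(m2 γ)

/-- `μ` is an invariant measure for the transition function `p`. -/
def KInvariantMeasure {S : Type*} [MeasurableSpace S] (μ : Measure S) (p : S → Measure S) :
    Prop :=
  ∀ A : Set S, MeasurableSet A → ∫⁻ x, p x A ∂μ = μ A

/-- The set `A` is `(μ,p)`-invariant. -/
def KInvariantSet {S : Type*} [MeasurableSpace S] (μ : Measure S) (p : S → Measure S)
    (A : Set S) : Prop :=
  ∀ᵐ x ∂μ, x ∈ A → p x A = 1

/-- `μ` is an ergodic measure for the transition function `p`. -/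
def KErgodicMeasure {S : Type*} [MeasurableSpace S] (μ : Measure S) (p : S → Measure S) :
    Prop :=
  KInvariantMeasure μ p ∧
    ∀ A : Set S, MeasurableSet A → KInvariantSet μ p A → μ A = 0 ∨ μ A = 1

/-- The set `A` is `(μ,p)`-ergodic. -/
def KErgodicSet {S : Type*} [MeasurableSpace S] (μ : Measure S) (p : S → Measure S)
    (A : Set S) : Prop :=
  MeasurableSet A ∧ KInvariantSet μ p A ∧
    ∀ B : Set S, B ⊆ A → MeasurableSet B → KInvariantSet μ p B → μ B = 0 ∨ μ B = μ A

/-- `F⁺`: the slice of `F ⊆ E*` at `s = 1`. -/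
def Fplus (F : Set (ℝ × ℝ × ℝ)) : Set (ℝ × ℝ) := {p | (p.1, p.2, (1 : ℝ)) ∈ F}

/-- `F⁻`: the slice of `F ⊆ E*` at `s = −1`. -/
def Fminus (F : Set (ℝ × ℝ × ℝ)) : Set (ℝ × ℝ) := {p | (p.1, p.2, (-1 : ℝ)) ∈ F}

/-- `[G]^u ⊆ (−1,1)`. -/
def brU (γ : ℝ) (G : Set (ℝ × ℝ)) (u : ℝ) : Set ℝ :=
  {x | x ∈ Ioo (-1 : ℝ) 1 ∧ (u, ellMap γ u x) ∈ G}

/-- `[G]_v ⊆ (−1,1)`. -/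
def brV (γ : ℝ) (G : Set (ℝ × ℝ)) (v : ℝ) : Set ℝ :=
  {x | x ∈ Ioo (-1 : ℝ) 1 ∧ (ellMap γ v x, v) ∈ G}

/-- The map `T₀` on `E*`. -/
def T0 (γ : ℝ) (w : ℝ × ℝ × ℝ) : ℝ × ℝ × ℝ :=
  (-w.1 - 2 * w.2.1 * Real.cos γ, w.2.1, -w.2.2)

/-- The map `T₁` on `E*`. -/
def T1 (γ : ℝ) (w : ℝ × ℝ × ℝ) : ℝ × ℝ × ℝ :=
  (w.1, -w.2.1 - 2 * w.1 * Real.cos γ, -w.2.2)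

/-- The linear map `U_γ` taking `E` to the unit disk. -/
def Ugamma (γ : ℝ) (p : ℝ × ℝ) : ℝ × ℝ := (p.1 + p.2 * Real.cos γ, p.2 * Real.sin γ)

/-- `V(u,v,s) = s·|U_γ(u,v)|²`. -/
def Vfun (γ : ℝ) (w : ℝ × ℝ × ℝ) : ℝ :=
  w.2.2 * ((w.1 + w.2.1 * Real.cos γ) ^ 2 + (w.2.1 * Real.sin γ) ^ 2)

/-! Disintegrate `m²` first along the sheets `s = ±1`, then along the chords of `E`: with
`r(u) = √(1 - u² sin² γ)`, Lebesgue measure on `E` is `2 r(u) du ⊗ m¹(dt)` in the coordinates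
`(u, ℓ_u t)`, and likewise for horizontal chords. Each move of `Q` (resp. `Q†`) is a move of `q̂`
(resp. `q̂†`) along one chord, transported by `ℓ`. So both sides of the †-reversibility identity
for `Q` are chord averages of the two sides of the †-reversibility identity for `q̂`, which gives
(ii) ⇒ (iii); test functions living on one sheet and equal to `k ∘ ℓ_u⁻¹` there give (iii) ⇒ (ii).
Finally (i) ⇔ (ii) is the substitution `x ↦ -x`, under which `m¹` is invariant. -/

/-- Half the length of the chord `E_u`; it is `0` exactly when `E_u` is empty, since
`Real.sqrt` of a negative number is `0`. -/
def halfChord (γ u : ℝ) : ℝ := Real.sqrt (1 - u ^ 2 * Real.sin γ ^ 2)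

lemma ellMap_eq (γ u x : ℝ) : ellMap γ u x = -u * Real.cos γ + x * halfChord γ u := rfl

lemma ellInv_eq (γ u y : ℝ) : ellInv γ u y = (y + u * Real.cos γ) / halfChord γ u := rfl

section Chords

variable {γ : ℝ}

lemma halfChord_pos {u : ℝ} (hu : u ^ 2 * Real.sin γ ^ 2 < 1) : 0 < halfChord γ u :=
  Real.sqrt_pos.2 (by linarith)

lemma halfChord_sq {u : ℝ} (hu : u ^ 2 * Real.sin γ ^ 2 < 1) :
    halfChord γ u ^ 2 = 1 - u ^ 2 * Real.sin γ ^ 2 :=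
  Real.sq_sqrt (by linarith)

lemma halfChord_eq_zero {u : ℝ} (hu : ¬ u ^ 2 * Real.sin γ ^ 2 < 1) : halfChord γ u = 0 :=
  Real.sqrt_eq_zero'.2 (by linarith [not_lt.1 hu])

lemma continuous_halfChord : Continuous (halfChord γ) :=
  Real.continuous_sqrt.comp (by fun_prop)

lemma mem_Eset_iff {p : ℝ × ℝ} :
    p ∈ Eset γ ↔ (p.2 + p.1 * Real.cos γ) ^ 2 < 1 - p.1 ^ 2 * Real.sin γ ^ 2 := by
  have := Real.sin_sq_add_cos_sq γ
  simp only [Eset, mem_ofPred_eq]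
  constructor <;> intro h <;> nlinarith

lemma swap_mem_Eset {p : ℝ × ℝ} : p.swap ∈ Eset γ ↔ p ∈ Eset γ := by
  simp only [Eset, mem_ofPred_eq, Prod.fst_swap, Prod.snd_swap]
  constructor <;> intro h <;> linarith

lemma sq_mul_sin_sq_lt_one {p : ℝ × ℝ} (hp : p ∈ Eset γ) : p.1 ^ 2 * Real.sin γ ^ 2 < 1 := by
  nlinarith [mem_Eset_iff.1 hp, sq_nonneg (p.2 + p.1 * Real.cos γ)]

lemma isOpen_Eset : IsOpen (Eset γ) :=
  isOpen_lt (by fun_prop) continuous_const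

lemma ellInv_ellMap {u : ℝ} (hu : u ^ 2 * Real.sin γ ^ 2 < 1) (x : ℝ) :
    ellInv γ u (ellMap γ u x) = x := by
  rw [ellInv_eq, ellMap_eq]
  field_simp [(halfChord_pos hu).ne']
  ring

lemma ellMap_ellInv {u : ℝ} (hu : u ^ 2 * Real.sin γ ^ 2 < 1) (y : ℝ) :
    ellMap γ u (ellInv γ u y) = y := by
  rw [ellInv_eq, ellMap_eq]
  field_simp [(halfChord_pos hu).ne']
  ring

lemma mk_ellMap_mem_Eset_iff {u : ℝ} (hu : u ^ 2 * Real.sin γ ^ 2 < 1) {x : ℝ} :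
    (u, ellMap γ u x) ∈ Eset γ ↔ x ∈ Ioo (-1 : ℝ) 1 := by
  have hr := halfChord_pos hu
  rw [mem_Eset_iff, ← halfChord_sq hu, ellMap_eq, show -u * Real.cos γ + x * halfChord γ u +
    u * Real.cos γ = x * halfChord γ u by ring, mul_pow, mul_lt_iff_lt_one_left (pow_pos hr 2),
    sq_lt_one_iff_abs_lt_one, abs_lt, mem_Ioo]

lemma ellInv_mem_Ioo {p : ℝ × ℝ} (hp : p ∈ Eset γ) : ellInv γ p.1 p.2 ∈ Ioo (-1 : ℝ) 1 := by
  have hu := sq_mul_sin_sq_lt_one hp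
  rw [← mk_ellMap_mem_Eset_iff hu, ellMap_ellInv hu]
  exact hp

lemma setOf_mk_mem_Eset {u : ℝ} (hu : u ^ 2 * Real.sin γ ^ 2 < 1) :
    {v | (u, v) ∈ Eset γ} =
      Ioo (-u * Real.cos γ - halfChord γ u) (-u * Real.cos γ + halfChord γ u) := by
  ext v
  rw [mem_ofPred_eq, mem_Eset_iff, ← halfChord_sq hu, sq_lt_sq,
    abs_of_pos (halfChord_pos hu), abs_lt, mem_Ioo]
  constructor <;> rintro ⟨h1, h2⟩ <;> constructor <;> linarith

lemma setOf_mk_mem_Eset_eq_empty {u : ℝ} (hu : ¬ u ^ 2 * Real.sin γ ^ 2 < 1) :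
    {v | (u, v) ∈ Eset γ} = ∅ :=
  eq_empty_of_forall_notMem fun _ h => hu (sq_mul_sin_sq_lt_one h)

end Chords

section Slicing

variable {γ : ℝ}

lemma measurableSet_Eset : MeasurableSet (Eset γ) := isOpen_Eset.measurableSet

lemma volume_Eset_ne_zero : volume (Eset γ) ≠ 0 :=
  isOpen_Eset.measure_ne_zero volume ⟨(0, 0), by simp [Eset]⟩

lemma volume_Eset_ne_top (hγ : γ ∈ Ioo 0 Real.pi) : volume (Eset γ) ≠ ⊤ := by
  have hs : 0 < Real.sin γ := Real.sin_pos_of_pos_of_lt_pi hγ.1 hγ.2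
  obtain ⟨R, hR⟩ : ∃ R, ∀ x : ℝ, x ^ 2 * Real.sin γ ^ 2 < 1 → x ∈ Ioo (-R) R := by
    refine ⟨1 / Real.sin γ, fun x hx => ?_⟩
    rw [mem_Ioo, ← abs_lt, lt_div_iff₀ hs, ← abs_of_pos hs, ← abs_mul,
      ← sq_lt_one_iff_abs_lt_one, mul_pow]
    exact hx
  have hsub : Eset γ ⊆ Ioo (-R) R ×ˢ Ioo (-R) R := fun p hp =>
    ⟨hR _ (sq_mul_sin_sq_lt_one hp), hR _ (sq_mul_sin_sq_lt_one (swap_mem_Eset.2 hp))⟩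
  exact ((Metric.isBounded_Ioo _ _).prod (Metric.isBounded_Ioo _ _)).subset hsub
    |>.measure_lt_top.ne

lemma setIntegral_Ioo_eq_mul_setIntegral_Ioo_neg_one_one (a : ℝ) {r : ℝ} (hr : 0 < r)
    (h : ℝ → ℝ) :
    ∫ v in Ioo (a - r) (a + r), h v = r * ∫ t in Ioo (-1 : ℝ) 1, h (a + t * r) := by
  rw [← integral_Ioc_eq_integral_Ioo, ← integral_Ioc_eq_integral_Ioo,
    ← intervalIntegral.integral_of_le (by linarith),
    ← intervalIntegral.integral_of_le (by norm_num)]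
  simp_rw [show ∀ t, a + t * r = r * t + a from fun t => by ring]
  rw [intervalIntegral.integral_comp_mul_add h hr.ne', smul_eq_mul, mul_inv_cancel_left₀ hr.ne']
  congr 1 <;> ring

lemma setIntegral_Eset_eq {φ : ℝ × ℝ → ℝ} (hφ : IntegrableOn φ (Eset γ)) :
    ∫ p in Eset γ, φ p = ∫ u, halfChord γ u * ∫ t in Ioo (-1 : ℝ) 1, φ (u, ellMap γ u t) := by
  rw [← integral_indicator measurableSet_Eset, Measure.volume_eq_prod,
    integral_prod _
      (by rwa [← Measure.volume_eq_prod, integrable_indicator_iff measurableSet_Eset])]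
  congr 1
  ext u
  simp_rw [← indicator_comp_right (Prod.mk u)]
  rw [integral_indicator (measurable_prodMk_left measurableSet_Eset)]
  by_cases hu : u ^ 2 * Real.sin γ ^ 2 < 1
  · rw [show Prod.mk u ⁻¹' Eset γ = _ from setOf_mk_mem_Eset hu]
    exact setIntegral_Ioo_eq_mul_setIntegral_Ioo_neg_one_one _ (halfChord_pos hu) _
  · rw [preimage, setOf_mk_mem_Eset_eq_empty hu, halfChord_eq_zero hu, Measure.restrict_empty,
      integral_zero_measure, zero_mul]

lemma setIntegral_Eset_comp_swap (φ : ℝ × ℝ → ℝ) :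
    ∫ p in Eset γ, φ p.swap = ∫ p in Eset γ, φ p := by
  have h := (Measure.measurePreserving_swap (μ := (volume : Measure ℝ)) (ν := volume))
    |>.setIntegral_preimage_emb MeasurableEquiv.prodComm.measurableEmbedding φ (Eset γ)
  rwa [← Measure.volume_eq_prod, show Prod.swap ⁻¹' Eset γ = Eset γ from
    Set.ext fun _ => swap_mem_Eset] at h

lemma integral_halfChord (hγ : γ ∈ Ioo 0 Real.pi) :
    ∫ u, halfChord γ u = volume.real (Eset γ) / 2 := by
  have h := setIntegral_Eset_eq (γ := γ) (φ := fun _ => (1 : ℝ))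
    (integrableOn_const (volume_Eset_ne_top hγ))
  simp only [setIntegral_const, smul_eq_mul, mul_one, Real.volume_real_Ioo] at h
  rw [h, integral_mul_const]
  norm_num

end Slicing

section StateSpace

variable {γ : ℝ}

lemma measurableEmbedding_mk_sign (s : ℝ) :
    MeasurableEmbedding fun p : ℝ × ℝ => (p.1, p.2, s) :=
  MeasurableEquiv.prodAssoc.measurableEmbedding.comp (measurableEmbedding_prod_mk_right s)

lemma measurableSet_EstarSet : MeasurableSet (EstarSet γ) :=
  (measurableSet_Eset.preimage (by fun_prop)).inter
    (((measurableSet_singleton 1).union (measurableSet_singleton (-1))).preimage (by fun_prop))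

lemma m2_eq (γ : ℝ) :
    m2 γ = ((volume (Eset γ))⁻¹ * 2⁻¹) •
      ((volume.restrict (Eset γ)).map (fun p => (p.1, p.2, (1 : ℝ))) +
        (volume.restrict (Eset γ)).map (fun p => (p.1, p.2, (-1 : ℝ)))) := by
  rw [m2, Measure.prod_smul_right, Measure.prod_add, Measure.prod_dirac, Measure.prod_dirac,
    Measure.map_smul, Measure.map_smul, Measure.map_smul, Measure.map_add _ _ (by fun_prop),
    Measure.map_smul, Measure.map_smul, Measure.map_map (by fun_prop) (by fun_prop),
    Measure.map_map (by fun_prop) (by fun_prop), ← smul_add, smul_smul, mul_comm]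
  rfl

lemma ae_m2_mem_EstarSet (γ : ℝ) : ∀ᵐ w ∂m2 γ, w ∈ EstarSet γ := by
  rw [m2_eq]
  refine Measure.ae_smul_measure (ae_add_measure_iff.2 ⟨?_, ?_⟩) _ <;>
  · refine (measurableEmbedding_mk_sign _).ae_map_iff.2 ?_
    filter_upwards [ae_restrict_mem measurableSet_Eset] with p hp
    exact ⟨hp, by norm_num⟩

lemma integral_m2 {a : ℝ} (ha : a = 1 ∨ a = -1) {H : ℝ × ℝ × ℝ → ℝ}
    (hHa : IntegrableOn (fun p => H (p.1, p.2, a)) (Eset γ))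
    (hHna : IntegrableOn (fun p => H (p.1, p.2, -a)) (Eset γ)) :
    ∫ w, H w ∂m2 γ = (volume.real (Eset γ))⁻¹ * 2⁻¹ *
      ((∫ p in Eset γ, H (p.1, p.2, a)) + ∫ p in Eset γ, H (p.1, p.2, -a)) := by
  have h1 : IntegrableOn (fun p => H (p.1, p.2, 1)) (Eset γ) := by
    rcases ha with rfl | rfl
    exacts [hHa, by simpa using hHna]
  have h2 : IntegrableOn (fun p => H (p.1, p.2, -1)) (Eset γ) := by
    rcases ha with rfl | rfl
    exacts [hHna, hHa]
  rw [m2_eq, integral_smul_measure, integral_add_measure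
    ((measurableEmbedding_mk_sign _).integrable_map_iff.2 h1)
    ((measurableEmbedding_mk_sign _).integrable_map_iff.2 h2),
    (measurableEmbedding_mk_sign _).integral_map, (measurableEmbedding_mk_sign _).integral_map,
    smul_eq_mul, ENNReal.toReal_mul, ENNReal.toReal_inv, ENNReal.toReal_inv, ← measureReal_def]
  rcases ha with rfl | rfl
  · norm_num
  · norm_num [add_comm]

end StateSpace

/-- `Reversible1 q` and `DagReversible1 p` are, by definition, symmetry statements for this form. -/
def kernelPairing (p : ℝ → Measure ℝ) (k j : ℝ → ℝ) : ℝ := ∫ x, k x * ∫ y, j y ∂p x ∂m1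

lemma neg_mem_Ioo_neg_one_one {x : ℝ} (hx : x ∈ Ioo (-1 : ℝ) 1) : -x ∈ Ioo (-1 : ℝ) 1 :=
  ⟨by linarith [hx.2], by linarith [hx.1]⟩

lemma kernelPairing_zero_left (p : ℝ → Measure ℝ) (j : ℝ → ℝ) : kernelPairing p 0 j = 0 := by
  simp [kernelPairing]

lemma integral_m1 (h : ℝ → ℝ) : ∫ x, h x ∂m1 = 2⁻¹ * ∫ x in Ioo (-1 : ℝ) 1, h x := by
  rw [m1, integral_smul_measure, smul_eq_mul]
  norm_num

lemma integral_m1_comp_neg (h : ℝ → ℝ) : ∫ x, h (-x) ∂m1 = ∫ x, h x ∂m1 := by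
  simp only [integral_m1, ← integral_Ioc_eq_integral_Ioo,
    ← intervalIntegral.integral_of_le (show (-1 : ℝ) ≤ 1 by norm_num),
    intervalIntegral.integral_comp_neg h, neg_neg]

lemma kernelPairing_congr {p : ℝ → Measure ℝ}
    (hp : ∀ t ∈ Ioo (-1 : ℝ) 1, ∀ᵐ x ∂p t, x ∈ Ioo (-1 : ℝ) 1) {k k' j j' : ℝ → ℝ}
    (hk : EqOn k k' (Ioo (-1) 1)) (hj : EqOn j j' (Ioo (-1) 1)) :
    kernelPairing p k j = kernelPairing p k' j' := by
  rw [kernelPairing, kernelPairing, integral_m1, integral_m1]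
  congr 1
  refine setIntegral_congr_fun measurableSet_Ioo fun t ht => ?_
  rw [hk ht, integral_congr_ae ((hp t ht).mono fun x hx => hj hx)]

lemma BddCtsOn.comp_neg {j : ℝ → ℝ} (hj : BddCtsOn (Ioo (-1 : ℝ) 1) j) :
    BddCtsOn (Ioo (-1 : ℝ) 1) fun x => j (-x) := by
  obtain ⟨C, hC⟩ := hj.2
  exact ⟨hj.1.comp continuous_neg.continuousOn fun _ => neg_mem_Ioo_neg_one_one, C,
    fun x hx => hC _ (neg_mem_Ioo_neg_one_one hx)⟩

lemma integral_dag_neg (q : Kernel ℝ ℝ) (k : ℝ → ℝ) (x : ℝ) :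
    ∫ y, k y ∂dag (fun x => q (-x)) x = ∫ y, k (-y) ∂q x := by
  rw [dag, neg_neg]
  exact integral_map_equiv (MeasurableEquiv.neg ℝ) k

lemma kernelPairing_neg_eq (q : Kernel ℝ ℝ) (k j : ℝ → ℝ) :
    kernelPairing (fun x => q (-x)) k j = kernelPairing q (fun x => k (-x)) j := by
  rw [kernelPairing, ← integral_m1_comp_neg]
  simp only [neg_neg, kernelPairing]

/-- (i) tested on `(j, k ∘ neg)` is (ii) tested on `(j, k)`: substitute `x ↦ -x`, which
preserves `m¹`, on the left, and use `q̂†(x) = q(x)` pushed forward by negation on the right. -/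
lemma reversible1_iff_dagReversible1 (q : Kernel ℝ ℝ) :
    Reversible1 q ↔ DagReversible1 (fun x => q (-x)) := by
  have hdag : ∀ j k : ℝ → ℝ, kernelPairing (dag fun x => q (-x)) j k =
      kernelPairing q j fun y => k (-y) := fun j k => by
    simp only [kernelPairing, integral_dag_neg]
  constructor
  · intro h j k hj hk
    change kernelPairing _ k j = kernelPairing _ j k
    rw [kernelPairing_neg_eq, hdag]
    exact h j _ hj hk.comp_neg
  · intro h j k hj hk
    have := h j (fun x => k (-x)) hj hk.comp_neg
    change kernelPairing _ _ j = kernelPairing _ j _ at this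
    rw [kernelPairing_neg_eq, hdag] at this
    simpa only [neg_neg, kernelPairing] using this

section Markov

variable {q : Kernel ℝ ℝ}

lemma IsMarkovOnInterval.ae_mem_Ioo (hq : IsMarkovOnInterval q) {t : ℝ}
    (ht : t ∈ Ioo (-1 : ℝ) 1) : ∀ᵐ x ∂q t, x ∈ Ioo (-1 : ℝ) 1 :=
  have := hq.1
  ae_iff.2 ((prob_compl_eq_zero_iff measurableSet_Ioo).2 (hq.2 t ht))

lemma IsMarkovOnInterval.ae_hat_mem_Ioo (hq : IsMarkovOnInterval q) :
    ∀ t ∈ Ioo (-1 : ℝ) 1, ∀ᵐ x ∂q (-t), x ∈ Ioo (-1 : ℝ) 1 :=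
  fun _ ht => hq.ae_mem_Ioo (neg_mem_Ioo_neg_one_one ht)

lemma IsMarkovOnInterval.ae_dag_hat_mem_Ioo (hq : IsMarkovOnInterval q) :
    ∀ t ∈ Ioo (-1 : ℝ) 1, ∀ᵐ x ∂dag (fun x => q (-x)) t, x ∈ Ioo (-1 : ℝ) 1 := by
  intro t ht
  rw [dag, neg_neg]
  exact (ae_map_iff measurable_neg.aemeasurable measurableSet_Ioo).2
    ((hq.ae_mem_Ioo ht).mono fun x hx => neg_mem_Ioo_neg_one_one hx)

lemma coe_map_neg_eq_dag (q : Kernel ℝ ℝ) : ⇑(q.map fun y => -y) = dag fun x => q (-x) :=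
  funext fun x => by rw [Kernel.map_apply _ measurable_neg, dag, neg_neg]

end Markov

lemma integral_mul_integral_eq_indicator {α : Type*} [MeasurableSpace α] {μ : Measure α}
    {K : α → Measure α} {S : Set α} (hμ : ∀ᵐ w ∂μ, w ∈ S) (hK : ∀ w ∈ S, ∀ᵐ w' ∂K w, w' ∈ S)
    (f g : α → ℝ) :
    ∫ w, g w * ∫ w', f w' ∂K w ∂μ = ∫ w, S.indicator g w * ∫ w', S.indicator f w' ∂K w ∂μ := by
  refine integral_congr_ae (hμ.mono fun w hw => ?_)
  dsimp only
  rw [indicator_of_mem hw,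
    integral_congr_ae ((hK w hw).mono fun w' hw' => (indicator_of_mem hw' f).symm)]

section BddCtsOn

variable {X Y : Type*} [TopologicalSpace X] {S : Set X} {f : X → ℝ}

lemma BddCtsOn.measurable_indicator [MeasurableSpace X] [OpensMeasurableSpace X]
    (hf : BddCtsOn S f) (hS : MeasurableSet S) : Measurable (S.indicator f) := by
  classical
  rw [← piecewise_eq_indicator]
  exact hf.1.measurable_piecewise continuousOn_const hS

lemma BddCtsOn.exists_abs_indicator_le (hf : BddCtsOn S f) : ∃ C, ∀ x, |S.indicator f x| ≤ C := by
  obtain ⟨C, hC⟩ := hf.2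
  refine ⟨max C 0, fun x => ?_⟩
  by_cases hx : x ∈ S
  · rw [indicator_of_mem hx]; exact (hC x hx).trans (le_max_left _ _)
  · rw [indicator_of_notMem hx, abs_zero]; exact le_max_right _ _

lemma BddCtsOn.indicator_comp [TopologicalSpace Y] {T : Set Y} (hf : BddCtsOn S f) {F : Y → X}
    (hF : Continuous F) (hFT : MapsTo F T S) : BddCtsOn T fun y => S.indicator f (F y) := by
  have heq : EqOn (fun y => S.indicator f (F y)) (f ∘ F) T := fun _ hy =>
    indicator_of_mem (hFT hy) f
  obtain ⟨C, hC⟩ := hf.2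
  exact ⟨(hf.1.comp hF.continuousOn hFT).congr heq, C, fun y hy => heq hy ▸ hC _ (hFT hy)⟩

end BddCtsOn

/-- On the sheet `s = a` the first coordinate jumps along its horizontal chord, on the other
sheet the second coordinate jumps along its vertical chord, and the sheet flips.
`Q` and `Q†` are the cases `(a, p) = (-1, q̂)` and `(1, q̂†)`. -/
def chordKernel (γ a : ℝ) (p : ℝ → Measure ℝ) (w : ℝ × ℝ × ℝ) : Measure (ℝ × ℝ × ℝ) :=
  if w.2.2 = a then (p (ellInv γ w.2.1 w.1)).map fun x => (ellMap γ w.2.1 x, w.2.1, -a)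
  else (p (ellInv γ w.1 w.2.1)).map fun x => (w.1, ellMap γ w.1 x, a)

def vFiber (γ : ℝ) (F : ℝ × ℝ × ℝ → ℝ) (u s t : ℝ) : ℝ := F (u, ellMap γ u t, s)

def hFiber (γ : ℝ) (F : ℝ × ℝ × ℝ → ℝ) (v s t : ℝ) : ℝ := F (ellMap γ v t, v, s)

def chordIntegrand (γ : ℝ) (p : ℝ → Measure ℝ) (G F : ℝ × ℝ → ℝ) (z : ℝ × ℝ) : ℝ :=
  G z * ∫ x, F (z.1, ellMap γ z.1 x) ∂p (ellInv γ z.1 z.2)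

section ChordKernel

variable {γ : ℝ}

@[fun_prop]
lemma continuous_ellMap (γ u : ℝ) : Continuous (ellMap γ u) := by
  unfold ellMap; fun_prop

lemma measurable_ellMap : Measurable fun z : ℝ × ℝ => ellMap γ z.1 z.2 := by
  unfold ellMap; fun_prop

lemma measurable_ellInv : Measurable fun z : ℝ × ℝ => ellInv γ z.1 z.2 := by
  unfold ellInv; fun_prop

lemma measurable_chordIntegrand (κ : Kernel ℝ ℝ) [IsSFiniteKernel κ] {G F : ℝ × ℝ → ℝ}
    (hG : Measurable G) (hF : Measurable F) : Measurable (chordIntegrand γ κ G F) := by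
  refine hG.mul ?_
  have hK : StronglyMeasurable fun y : (ℝ × ℝ) × ℝ => F (y.1.1, ellMap γ y.1.1 y.2) :=
    (hF.comp (measurable_fst.fst.prodMk
      (measurable_ellMap.comp (measurable_fst.fst.prodMk measurable_snd)))).stronglyMeasurable
  exact (hK.integral_kernel_prod_right' (κ := κ.comap _ measurable_ellInv)).measurable

lemma abs_chordIntegrand_le (κ : Kernel ℝ ℝ) [IsMarkovKernel κ] {G F : ℝ × ℝ → ℝ} {CG CF : ℝ}
    (hG : ∀ z, |G z| ≤ CG) (hF : ∀ z, |F z| ≤ CF) (z : ℝ × ℝ) :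
    |chordIntegrand γ κ G F z| ≤ CG * CF := by
  rw [chordIntegrand, abs_mul]
  refine mul_le_mul (hG z) ?_ (abs_nonneg _) ((abs_nonneg _).trans (hG z))
  simpa using norm_integral_le_of_norm_le_const (μ := κ (ellInv γ z.1 z.2))
    (f := fun x => F (z.1, ellMap γ z.1 x)) (ae_of_all _ fun x => hF _)

lemma integrableOn_Eset_of_abs_le (hγ : γ ∈ Ioo 0 Real.pi) {φ : ℝ × ℝ → ℝ} (hφ : Measurable φ)
    {C : ℝ} (hC : ∀ z, |φ z| ≤ C) : IntegrableOn φ (Eset γ) :=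
  IntegrableOn.of_bound (volume_Eset_ne_top hγ).lt_top hφ.aestronglyMeasurable C (ae_of_all _ hC)

lemma setIntegral_chordIntegrand (hγ : γ ∈ Ioo 0 Real.pi) (κ : Kernel ℝ ℝ) [IsMarkovKernel κ]
    {G F : ℝ × ℝ → ℝ} (hG : Measurable G) (hF : Measurable F) {CG CF : ℝ}
    (hGb : ∀ z, |G z| ≤ CG) (hFb : ∀ z, |F z| ≤ CF) :
    ∫ z in Eset γ, chordIntegrand γ κ G F z = 2 * ∫ u, halfChord γ u *
      kernelPairing κ (fun t => G (u, ellMap γ u t)) (fun x => F (u, ellMap γ u x)) := by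
  rw [setIntegral_Eset_eq (integrableOn_Eset_of_abs_le hγ (measurable_chordIntegrand κ hG hF)
    (abs_chordIntegrand_le κ hGb hFb)), ← integral_const_mul]
  congr 1
  ext u
  by_cases hu : u ^ 2 * Real.sin γ ^ 2 < 1
  · simp only [chordIntegrand, ellInv_ellMap hu, kernelPairing, integral_m1]
    ring
  · simp [halfChord_eq_zero hu]

lemma integral_mul_integral_chordKernel (hγ : γ ∈ Ioo 0 Real.pi) {a : ℝ} (ha : a = 1 ∨ a = -1)
    (κ : Kernel ℝ ℝ) [IsMarkovKernel κ] {G F : ℝ × ℝ × ℝ → ℝ} (hG : Measurable G)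
    (hF : Measurable F) {CG CF : ℝ} (hGb : ∀ w, |G w| ≤ CG) (hFb : ∀ w, |F w| ≤ CF) :
    ∫ w, G w * ∫ w', F w' ∂chordKernel γ a κ w ∂m2 γ = (volume.real (Eset γ))⁻¹ *
      ((∫ v, halfChord γ v * kernelPairing κ (hFiber γ G v a) (hFiber γ F v (-a))) +
        ∫ u, halfChord γ u * kernelPairing κ (vFiber γ G u (-a)) (vFiber γ F u a)) := by
  have hna : -a ≠ a := by rcases ha with rfl | rfl <;> norm_num
  have hGh : Measurable fun z : ℝ × ℝ => G (z.2, z.1, a) := hG.comp (by fun_prop)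
  have hFh : Measurable fun z : ℝ × ℝ => F (z.2, z.1, -a) := hF.comp (by fun_prop)
  have hGv : Measurable fun z : ℝ × ℝ => G (z.1, z.2, -a) := hG.comp (by fun_prop)
  have hFv : Measurable fun z : ℝ × ℝ => F (z.1, z.2, a) := hF.comp (by fun_prop)
  -- on the sheet `s = a` the jumps are horizontal: swapping the coordinates makes them vertical
  have hHh : (fun z : ℝ × ℝ => G (z.1, z.2, a) * ∫ w', F w' ∂chordKernel γ a κ (z.1, z.2, a)) =
      fun z =>
        chordIntegrand γ κ (fun y => G (y.2, y.1, a)) (fun y => F (y.2, y.1, -a)) z.swap := by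
    ext z
    rw [chordKernel, if_pos rfl, integral_map (by fun_prop) hF.aestronglyMeasurable]
    rfl
  have hHv : (fun z : ℝ × ℝ => G (z.1, z.2, -a) * ∫ w', F w' ∂chordKernel γ a κ (z.1, z.2, -a)) =
      chordIntegrand γ κ (fun z => G (z.1, z.2, -a)) (fun z => F (z.1, z.2, a)) := by
    ext z
    rw [chordKernel, if_neg hna, integral_map (by fun_prop) hF.aestronglyMeasurable]
    rfl
  have hint_h : IntegrableOn (fun z : ℝ × ℝ =>
      G (z.1, z.2, a) * ∫ w', F w' ∂chordKernel γ a κ (z.1, z.2, a)) (Eset γ) := by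
    rw [hHh]
    exact integrableOn_Eset_of_abs_le hγ ((measurable_chordIntegrand κ hGh hFh).comp
      measurable_swap) fun z => abs_chordIntegrand_le κ (fun _ => hGb _) (fun _ => hFb _) _
  have hint_v : IntegrableOn (fun z : ℝ × ℝ =>
      G (z.1, z.2, -a) * ∫ w', F w' ∂chordKernel γ a κ (z.1, z.2, -a)) (Eset γ) := by
    rw [hHv]
    exact integrableOn_Eset_of_abs_le hγ (measurable_chordIntegrand κ hGv hFv)
      (abs_chordIntegrand_le κ (fun _ => hGb _) (fun _ => hFb _))
  rw [integral_m2 ha hint_h hint_v, hHh, hHv, setIntegral_Eset_comp_swap,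
    setIntegral_chordIntegrand hγ κ hGh hFh (fun _ => hGb _) (fun _ => hFb _),
    setIntegral_chordIntegrand hγ κ hGv hFv (fun _ => hGb _) (fun _ => hFb _)]
  unfold vFiber hFiber
  ring

lemma ae_chordKernel_mem_EstarSet {a : ℝ} (ha : a = 1 ∨ a = -1) {p : ℝ → Measure ℝ}
    (hp : ∀ t ∈ Ioo (-1 : ℝ) 1, ∀ᵐ x ∂p t, x ∈ Ioo (-1 : ℝ) 1) {w : ℝ × ℝ × ℝ}
    (hw : w ∈ EstarSet γ) : ∀ᵐ w' ∂chordKernel γ a p w, w' ∈ EstarSet γ := by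
  have hna : -a = 1 ∨ -a = -1 := by rcases ha with rfl | rfl <;> norm_num
  obtain ⟨hE, -⟩ := hw
  rw [chordKernel]
  split_ifs
  · have hE' : (w.2.1, w.1) ∈ Eset γ := swap_mem_Eset.2 hE
    refine (ae_map_iff (by fun_prop) measurableSet_EstarSet).2 ?_
    filter_upwards [hp _ (ellInv_mem_Ioo hE')] with x hx
    exact ⟨swap_mem_Eset.1 ((mk_ellMap_mem_Eset_iff (sq_mul_sin_sq_lt_one hE')).2 hx), hna⟩
  · refine (ae_map_iff (by fun_prop) measurableSet_EstarSet).2 ?_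
    filter_upwards [hp _ (ellInv_mem_Ioo hE)] with x hx
    exact ⟨(mk_ellMap_mem_Eset_iff (sq_mul_sin_sq_lt_one hE)).2 hx, ha⟩

lemma Qfun_eq_chordKernel (γ : ℝ) (q : Kernel ℝ ℝ) :
    Qfun γ q = chordKernel γ (-1) fun x => q (-x) := by
  funext w
  simp only [Qfun, chordKernel, neg_neg]

lemma Qdag_eq_chordKernel (γ : ℝ) (q : Kernel ℝ ℝ) :
    Qdag γ q = chordKernel γ 1 (dag fun x => q (-x)) := by
  funext w
  simp only [Qdag, chordKernel, dag, neg_neg]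

/-- Extending the test functions by zero off `E*` makes them measurable and changes neither
side, as `m²` and the kernels live on `E*`. -/
lemma integral_mul_integral_Qfun (hγ : γ ∈ Ioo 0 Real.pi) {q : Kernel ℝ ℝ}
    (hq : IsMarkovOnInterval q) {f g : ℝ × ℝ × ℝ → ℝ} (hf : BddCtsOn (EstarSet γ) f)
    (hg : BddCtsOn (EstarSet γ) g) :
    ∫ w, g w * ∫ w', f w' ∂Qfun γ q w ∂m2 γ = (volume.real (Eset γ))⁻¹ *
      ((∫ v, halfChord γ v * kernelPairing (fun x => q (-x))
          (hFiber γ ((EstarSet γ).indicator g) v (-1))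
          (hFiber γ ((EstarSet γ).indicator f) v 1)) +
        ∫ u, halfChord γ u * kernelPairing (fun x => q (-x))
          (vFiber γ ((EstarSet γ).indicator g) u 1)
          (vFiber γ ((EstarSet γ).indicator f) u (-1))) := by
  have := hq.1
  obtain ⟨Cf, hCf⟩ := hf.exists_abs_indicator_le
  obtain ⟨Cg, hCg⟩ := hg.exists_abs_indicator_le
  rw [Qfun_eq_chordKernel, integral_mul_integral_eq_indicator (ae_m2_mem_EstarSet γ)
    fun w hw => ae_chordKernel_mem_EstarSet (Or.inr rfl) hq.ae_hat_mem_Ioo hw]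
  have h := integral_mul_integral_chordKernel hγ (Or.inr rfl)
    (q.comap (fun x => -x) measurable_neg) (hg.measurable_indicator measurableSet_EstarSet)
    (hf.measurable_indicator measurableSet_EstarSet) hCg hCf
  rw [neg_neg] at h
  exact h

lemma integral_mul_integral_Qdag (hγ : γ ∈ Ioo 0 Real.pi) {q : Kernel ℝ ℝ}
    (hq : IsMarkovOnInterval q) {f g : ℝ × ℝ × ℝ → ℝ} (hf : BddCtsOn (EstarSet γ) f)
    (hg : BddCtsOn (EstarSet γ) g) :
    ∫ w, f w * ∫ w', g w' ∂Qdag γ q w ∂m2 γ = (volume.real (Eset γ))⁻¹ *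
      ((∫ v, halfChord γ v * kernelPairing (dag fun x => q (-x))
          (hFiber γ ((EstarSet γ).indicator f) v 1)
          (hFiber γ ((EstarSet γ).indicator g) v (-1))) +
        ∫ u, halfChord γ u * kernelPairing (dag fun x => q (-x))
          (vFiber γ ((EstarSet γ).indicator f) u (-1))
          (vFiber γ ((EstarSet γ).indicator g) u 1)) := by
  have := hq.1
  have : IsMarkovKernel (q.map fun y => -y) := Kernel.IsMarkovKernel.map _ measurable_neg
  obtain ⟨Cf, hCf⟩ := hf.exists_abs_indicator_le
  obtain ⟨Cg, hCg⟩ := hg.exists_abs_indicator_le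
  rw [Qdag_eq_chordKernel, integral_mul_integral_eq_indicator (ae_m2_mem_EstarSet γ)
    fun w hw => ae_chordKernel_mem_EstarSet (Or.inl rfl) hq.ae_dag_hat_mem_Ioo hw,
    ← coe_map_neg_eq_dag]
  exact integral_mul_integral_chordKernel hγ (Or.inl rfl) (q.map fun y => -y)
    (hf.measurable_indicator measurableSet_EstarSet)
    (hg.measurable_indicator measurableSet_EstarSet) hCf hCg

end ChordKernel

/-- For `c = ±1`: `k ∘ ℓ_u⁻¹` on the vertical chords of the sheet `s = c`, and `0` on the other
sheet. -/
def signedLift (γ c : ℝ) (k : ℝ → ℝ) (w : ℝ × ℝ × ℝ) : ℝ :=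
  (1 + c * w.2.2) / 2 * k (ellInv γ w.1 w.2.1)

section Fibers

variable {γ : ℝ}

lemma integral_halfChord_mul_congr {A B : ℝ → ℝ}
    (h : ∀ u, u ^ 2 * Real.sin γ ^ 2 < 1 → A u = B u) :
    ∫ u, halfChord γ u * A u = ∫ u, halfChord γ u * B u := by
  refine integral_congr_ae (ae_of_all _ fun u => ?_)
  dsimp only
  by_cases hu : u ^ 2 * Real.sin γ ^ 2 < 1
  · rw [h u hu]
  · simp only [halfChord_eq_zero hu, zero_mul]

lemma BddCtsOn.vFiber_indicator {f : ℝ × ℝ × ℝ → ℝ} (hf : BddCtsOn (EstarSet γ) f) {u s : ℝ}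
    (hu : u ^ 2 * Real.sin γ ^ 2 < 1) (hs : s = 1 ∨ s = -1) :
    BddCtsOn (Ioo (-1 : ℝ) 1) (vFiber γ ((EstarSet γ).indicator f) u s) :=
  hf.indicator_comp (by fun_prop) fun _ ht => ⟨(mk_ellMap_mem_Eset_iff hu).2 ht, hs⟩

lemma BddCtsOn.hFiber_indicator {f : ℝ × ℝ × ℝ → ℝ} (hf : BddCtsOn (EstarSet γ) f) {v s : ℝ}
    (hv : v ^ 2 * Real.sin γ ^ 2 < 1) (hs : s = 1 ∨ s = -1) :
    BddCtsOn (Ioo (-1 : ℝ) 1) (hFiber γ ((EstarSet γ).indicator f) v s) :=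
  hf.indicator_comp (by fun_prop) fun _ ht =>
    ⟨swap_mem_Eset.1 ((mk_ellMap_mem_Eset_iff hv).2 ht), hs⟩

lemma continuousOn_ellInv_EstarSet :
    ContinuousOn (fun w : ℝ × ℝ × ℝ => ellInv γ w.1 w.2.1) (EstarSet γ) := by
  simp only [ellInv_eq]
  exact ContinuousOn.div (by fun_prop) (continuous_halfChord.comp continuous_fst).continuousOn
    fun w hw => (halfChord_pos (sq_mul_sin_sq_lt_one hw.1)).ne'

lemma bddCtsOn_signedLift {c : ℝ} (hc : c = 1 ∨ c = -1) {k : ℝ → ℝ}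
    (hk : BddCtsOn (Ioo (-1 : ℝ) 1) k) : BddCtsOn (EstarSet γ) (signedLift γ c k) := by
  have hmaps : MapsTo (fun w : ℝ × ℝ × ℝ => ellInv γ w.1 w.2.1) (EstarSet γ) (Ioo (-1) 1) :=
    fun w hw => ellInv_mem_Ioo hw.1
  obtain ⟨C, hC⟩ := hk.2
  refine ⟨(Continuous.continuousOn (by fun_prop)).mul
    (hk.1.comp continuousOn_ellInv_EstarSet hmaps), C, fun w hw => ?_⟩
  have hweight : |(1 + c * w.2.2) / 2| ≤ 1 := by
    rcases hc with rfl | rfl <;> rcases hw.2 with h | h <;> rw [h] <;> norm_num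
  rw [signedLift, abs_mul]
  exact (mul_le_of_le_one_left (abs_nonneg _) hweight).trans (hC _ (hmaps hw))

lemma hFiber_indicator_signedLift {c s : ℝ} (hcs : 1 + c * s = 0) (k : ℝ → ℝ) (v : ℝ) :
    hFiber γ ((EstarSet γ).indicator (signedLift γ c k)) v s = 0 := by
  funext t
  simp [hFiber, signedLift, hcs]

lemma eqOn_vFiber_indicator_signedLift {c : ℝ} (hc : c = 1 ∨ c = -1) (k : ℝ → ℝ) {u : ℝ}
    (hu : u ^ 2 * Real.sin γ ^ 2 < 1) :
    EqOn (vFiber γ ((EstarSet γ).indicator (signedLift γ c k)) u c) k (Ioo (-1) 1) := by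
  intro t ht
  have hmem : (u, ellMap γ u t, c) ∈ EstarSet γ := ⟨(mk_ellMap_mem_Eset_iff hu).2 ht, hc⟩
  have hcc : (1 + c * c) / 2 = 1 := by rcases hc with rfl | rfl <;> norm_num
  rw [vFiber, indicator_of_mem hmem, signedLift]
  simp only [hcc, ellInv_ellMap hu, one_mul]

lemma integral_halfChord_mul_kernelPairing_signedLift {p : ℝ → Measure ℝ}
    (hp : ∀ t ∈ Ioo (-1 : ℝ) 1, ∀ᵐ x ∂p t, x ∈ Ioo (-1 : ℝ) 1) {c c' : ℝ} (hc : c = 1 ∨ c = -1)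
    (hc' : c' = 1 ∨ c' = -1) (k j : ℝ → ℝ) :
    ∫ u, halfChord γ u * kernelPairing p (vFiber γ ((EstarSet γ).indicator (signedLift γ c k)) u c)
      (vFiber γ ((EstarSet γ).indicator (signedLift γ c' j)) u c') =
      (∫ u, halfChord γ u) * kernelPairing p k j := by
  rw [← integral_mul_const]
  exact integral_halfChord_mul_congr fun u hu => kernelPairing_congr hp
    (eqOn_vFiber_indicator_signedLift hc k hu) (eqOn_vFiber_indicator_signedLift hc' j hu)

end Fibers

lemma dagReversible1_iff_dagReversible2 {γ : ℝ} (hγ : γ ∈ Ioo 0 Real.pi) {q : Kernel ℝ ℝ}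
    (hq : IsMarkovOnInterval q) : DagReversible1 (fun x => q (-x)) ↔ DagReversible2 γ q := by
  constructor
  · intro h f g hf hg
    rw [integral_mul_integral_Qfun hγ hq hf hg, integral_mul_integral_Qdag hγ hq hf hg]
    congr 2 <;> refine integral_halfChord_mul_congr fun u hu => h _ _ ?_ ?_
    exacts [hf.hFiber_indicator hu (Or.inl rfl), hg.hFiber_indicator hu (Or.inr rfl),
      hf.vFiber_indicator hu (Or.inr rfl), hg.vFiber_indicator hu (Or.inl rfl)]
  · intro h j k hj hk
    have hf := bddCtsOn_signedLift (γ := γ) (Or.inr rfl) hj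
    have hg := bddCtsOn_signedLift (γ := γ) (Or.inl rfl) hk
    have key := h _ _ hf hg
    rw [integral_mul_integral_Qfun hγ hq hf hg, integral_mul_integral_Qdag hγ hq hf hg,
      integral_halfChord_mul_kernelPairing_signedLift hq.ae_hat_mem_Ioo (Or.inl rfl) (Or.inr rfl),
      integral_halfChord_mul_kernelPairing_signedLift hq.ae_dag_hat_mem_Ioo (Or.inr rfl)
        (Or.inl rfl)] at key
    -- the test functions vanish on the horizontal-chord terms
    simp only [hFiber_indicator_signedLift (c := 1) (s := -1) (by norm_num),
      hFiber_indicator_signedLift (c := -1) (s := 1) (by norm_num), kernelPairing_zero_left,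
      mul_zero, integral_zero, zero_add] at key
    have hV : volume.real (Eset γ) ≠ 0 :=
      ENNReal.toReal_ne_zero.2 ⟨volume_Eset_ne_zero, volume_Eset_ne_top hγ⟩
    have hr : ∫ u, halfChord γ u ≠ 0 := by
      rw [integral_halfChord hγ]; exact div_ne_zero hV two_ne_zero
    exact mul_left_cancel₀ hr (mul_left_cancel₀ (inv_ne_zero hV) key)

/-- `m¹` is reversible for `q` iff `m¹` is `†`-reversible for `q̂` iff
`m²` is `†`-reversible for `Q`. -/
theorem reversibility_equivalence (γ : ℝ) (hγ : γ ∈ Ioo 0 Real.pi)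
    (q : Kernel ℝ ℝ) (hq : IsMarkovOnInterval q) :
    (Reversible1 q ↔ DagReversible1 (fun x => q (-x))) ∧
    (Reversible1 q ↔ DagReversible2 γ q) :=
  ⟨reversible1_iff_dagReversible1 q,
    (reversible1_iff_dagReversible1 q).trans (dagReversible1_iff_dagReversible2 hγ hq)⟩
end
end

section
/- Let p be a Markov kernel on a measurable space (S,𝒮) and let μ be a probability measure on (S,𝒮) invariant for p, with the property that every (μ,p)-ergodic set G ∈ 𝒮 satisfies μ(G) = 0. Then for every (μ,p)-invariant set F ∈ 𝒮 there exists a (μ,p)-invariant set F′ ∈ 𝒮 with F′ ⊂ F and (1/4)μ(F) ≤ μ(F′) ≤ (1/2)μ(F). -/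
open MeasureTheory ProbabilityTheory Set Pointwise
open scoped ENNReal

noncomputable section

/-!
Measurable `(μ, p)`-invariant sets form a σ-algebra: complements stay invariant because the
invariance of `μ` forbids the chain to enter an invariant set from outside. The hypothesis on
ergodic sets says exactly that `μ`, restricted to this σ-algebra, has no atoms, and every set
of positive measure under an atomless finite measure contains a subset carrying between a
quarter and a half of its mass.
-/

theorem ENNReal.div_four_add_div_four (a : ℝ≥0∞) : a / 4 + a / 4 = a / 2 := by
  rw [ENNReal.div_add_div_same, ← two_mul, show (4 : ℝ≥0∞) = 2 * 2 by norm_num,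
    ENNReal.mul_div_mul_left _ _ two_ne_zero ENNReal.ofNat_ne_top]

/-- Not to be confused with `NoAtoms`, which only concerns singletons. -/
def IsAtomless {α : Type*} {_ : MeasurableSpace α} (μ : Measure α) : Prop :=
  ∀ A, MeasurableSet A → μ A ≠ 0 → ∃ B ⊆ A, MeasurableSet B ∧ μ B ≠ 0 ∧ μ B ≠ μ A

section Atomless

variable {α : Type*} {_ : MeasurableSpace α} (μ : Measure α)

theorem exists_seq_mem_measure_iUnion_eq_sSup {T : Set (Set α)} (hT : T.Nonempty)
    (hunion : ∀ B ∈ T, ∀ B' ∈ T, B ∪ B' ∈ T) :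
    ∃ B : ℕ → Set α, (∀ n, B n ∈ T) ∧ μ (⋃ n, B n) = sSup (μ '' T) := by
  obtain ⟨u, -, hu_lim, hu_mem⟩ := exists_seq_tendsto_sSup (hT.image μ) (OrderTop.bddAbove _)
  choose B hBT hBu using hu_mem
  have hacc : ∀ n, accumulate B n ∈ T := by
    intro n
    induction n with
    | zero => simpa using hBT 0
    | succ n ih => simpa using hunion _ ih _ (hBT (n + 1))
  refine ⟨B, hBT, le_antisymm ?_ ?_⟩
  · rw [measure_iUnion_eq_iSup_accumulate]
    exact iSup_le fun n => le_sSup (mem_image_of_mem μ (hacc n))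
  · refine le_of_tendsto' hu_lim fun n => ?_
    rw [← hBu n]
    exact measure_mono (subset_iUnion B n)

variable {μ} [IsFiniteMeasure μ]

theorem IsAtomless.exists_subset_measure_le_half (hμ : IsAtomless μ) {A : Set α}
    (hA : MeasurableSet A) (hA0 : μ A ≠ 0) :
    ∃ D ⊆ A, MeasurableSet D ∧ μ D ≠ 0 ∧ μ D ≤ μ A / 2 := by
  obtain ⟨B, hBA, hB, hB0, hBA'⟩ := hμ A hA hA0
  have hdiff : μ (A \ B) = μ A - μ B :=
    measure_sdiff hBA hB.nullMeasurableSet (measure_ne_top μ B)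
  rcases le_or_gt (μ B) (μ A / 2) with h | h
  · exact ⟨B, hBA, hB, hB0, h⟩
  refine ⟨A \ B, sdiff_subset, hA.diff hB, ?_, ?_⟩
  · rw [hdiff]
    exact (tsub_pos_of_lt ((measure_mono hBA).lt_of_ne hBA')).ne'
  · rw [hdiff, tsub_le_iff_right]
    calc μ A = μ A / 2 + μ A / 2 := (ENNReal.add_halves _).symm
      _ ≤ μ A / 2 + μ B := by gcongr

/-- If no subset of `F` had measure in `[μ F / 4, μ F / 2]`, the subsets of measure `< μ F / 4`
would be closed under unions; a countable union `C` of them attains their supremum, and a small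
non-null piece of `F \ C` could then be added to `C`. -/
theorem IsAtomless.exists_subset_measure_mem_Icc (hμ : IsAtomless μ) {F : Set α}
    (hF : MeasurableSet F) :
    ∃ F' ⊆ F, MeasurableSet F' ∧ μ F / 4 ≤ μ F' ∧ μ F' ≤ μ F / 2 := by
  set t := μ F
  by_contra! hgap
  have hlt_quarter : ∀ B ⊆ F, MeasurableSet B → μ B ≤ t / 2 → μ B < t / 4 := fun B hBF hB hBt =>
    lt_of_not_ge fun h => (hgap B hBF hB h).not_ge hBt
  have ht0 : t ≠ 0 := fun ht => (hgap ∅ (empty_subset F) .empty (by simp [ht])).ne (by simp [ht])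
  have hquarter_half : t / 4 ≤ t / 2 := ENNReal.div_le_div_left (by norm_num) t
  set T := {B | B ⊆ F ∧ MeasurableSet B ∧ μ B < t / 4}
  have hempty : ∅ ∈ T := ⟨empty_subset F, .empty,
    by simpa [pos_iff_ne_zero] using ENNReal.div_pos ht0 (ENNReal.ofNat_ne_top (n := 4))⟩
  have hunion : ∀ B ∈ T, ∀ B' ∈ T, B ∪ B' ∈ T := by
    rintro B ⟨hBF, hB, hBt⟩ B' ⟨hB'F, hB', hB't⟩
    refine ⟨union_subset hBF hB'F, hB.union hB',
      hlt_quarter _ (union_subset hBF hB'F) (hB.union hB') ?_⟩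
    calc μ (B ∪ B') ≤ μ B + μ B' := measure_union_le B B'
      _ ≤ t / 4 + t / 4 := add_le_add hBt.le hB't.le
      _ = t / 2 := ENNReal.div_four_add_div_four t
  obtain ⟨B, hBT, hCsup⟩ := exists_seq_mem_measure_iUnion_eq_sSup μ ⟨∅, hempty⟩ hunion
  set C := ⋃ n, B n
  have hCF : C ⊆ F := iUnion_subset fun n => (hBT n).1
  have hC : MeasurableSet C := .iUnion fun n => (hBT n).2.1
  have hCT : C ∈ T := by
    refine ⟨hCF, hC, hlt_quarter C hCF hC ?_⟩
    rw [hCsup]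
    exact sSup_le (forall_mem_image.2 fun B hB => hB.2.2.le.trans hquarter_half)
  have hrest : μ (F \ C) ≠ 0 := by
    rw [measure_sdiff hCF hC.nullMeasurableSet (measure_ne_top μ C)]
    exact (tsub_pos_of_lt (hCT.2.2.trans_le (hquarter_half.trans ENNReal.half_le_self))).ne'
  obtain ⟨D, hDFC, hD, hD0, hDhalf⟩ := hμ.exists_subset_measure_le_half (hF.diff hC) hrest
  have hDF : D ⊆ F := hDFC.trans sdiff_subset
  have hDT : D ∈ T :=
    ⟨hDF, hD, hlt_quarter D hDF hD (hDhalf.trans (by gcongr; exact measure_mono sdiff_subset))⟩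
  have hCD : μ (C ∪ D) = μ C + μ D :=
    measure_union (disjoint_left.2 fun x hxC hxD => (hDFC hxD).2 hxC) hD
  have hCD_le : μ (C ∪ D) ≤ μ C := hCsup ▸ le_sSup (mem_image_of_mem μ (hunion C hCT D hDT))
  exact (ENNReal.lt_add_right (measure_ne_top μ C) hD0).not_ge (hCD ▸ hCD_le)

end Atomless

section Invariant

variable {S : Type*} [MeasurableSpace S] {p : Kernel S S} {μ : Measure S}

theorem KInvariantSet.empty : KInvariantSet μ (fun x => p x) ∅ :=
  .of_forall fun _ hx => hx.elim

theorem KInvariantSet.iUnion [IsMarkovKernel p] {ι : Sort*} [Countable ι] {A : ι → Set S}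
    (hA : ∀ i, KInvariantSet μ (fun x => p x) (A i)) :
    KInvariantSet μ (fun x => p x) (⋃ i, A i) := by
  filter_upwards [ae_all_iff.2 hA] with x hx hxA
  obtain ⟨i, hi⟩ := mem_iUnion.1 hxA
  exact le_antisymm prob_le_one (hx i hi ▸ measure_mono (subset_iUnion A i))

/-- The mass `∫⁻ p(·, A) dμ = μ A` is already carried by `A` itself, so none is left for `Aᶜ`. -/
theorem KInvariantSet.ae_eq_zero_of_notMem [IsFiniteMeasure μ]
    (hinv : KInvariantMeasure μ (fun x => p x)) {A : Set S} (hA : MeasurableSet A)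
    (hAi : KInvariantSet μ (fun x => p x) A) : ∀ᵐ x ∂μ, x ∉ A → p x A = 0 := by
  have hon : ∫⁻ x in A, p x A ∂μ = μ A := by
    rw [setLIntegral_congr_fun_ae hA hAi]
    simp
  have hoff : ∫⁻ x in Aᶜ, p x A ∂μ = 0 := by
    have h := lintegral_add_compl (fun x => p x A) (μ := μ) hA
    rw [hon, hinv A hA] at h
    exact (ENNReal.add_right_inj (measure_ne_top μ A)).1 (h.trans (add_zero _).symm)
  have h0 := (lintegral_eq_zero_iff (p.measurable_coe hA)).1 hoff
  rw [Filter.EventuallyEq, ae_restrict_iff' hA.compl] at h0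
  exact h0

theorem KInvariantSet.compl [IsMarkovKernel p] [IsFiniteMeasure μ]
    (hinv : KInvariantMeasure μ (fun x => p x)) {A : Set S} (hA : MeasurableSet A)
    (hAi : KInvariantSet μ (fun x => p x) A) : KInvariantSet μ (fun x => p x) Aᶜ := by
  filter_upwards [hAi.ae_eq_zero_of_notMem hinv hA] with x hx hxA
  rw [prob_compl_eq_one_sub hA, hx hxA, tsub_zero]

variable [IsMarkovKernel p] [IsFiniteMeasure μ]

@[reducible]
def KInvariantMeasure.invariants (hinv : KInvariantMeasure μ (fun x => p x)) :
    MeasurableSpace S where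
  MeasurableSet' A := MeasurableSet A ∧ KInvariantSet μ (fun x => p x) A
  measurableSet_empty := ⟨.empty, .empty⟩
  measurableSet_compl _ hA := ⟨hA.1.compl, hA.2.compl hinv hA.1⟩
  measurableSet_iUnion _ hA := ⟨.iUnion fun n => (hA n).1, .iUnion fun n => (hA n).2⟩

theorem KInvariantMeasure.invariants_le (hinv : KInvariantMeasure μ (fun x => p x)) :
    hinv.invariants ≤ ‹MeasurableSpace S› :=
  fun _ hA => hA.1

theorem KInvariantMeasure.isAtomless_trim_invariants (hinv : KInvariantMeasure μ (fun x => p x))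
    (herg : ∀ G : Set S, KErgodicSet μ (fun x => p x) G → μ G = 0) :
    IsAtomless (μ.trim hinv.invariants_le) := by
  have htrim {B : Set S} (hB : MeasurableSet[hinv.invariants] B) :
      μ.trim hinv.invariants_le B = μ B :=
    trim_measurableSet_eq _ hB
  intro A hA hA0
  by_contra! hatom
  rw [htrim hA] at hA0
  refine hA0 (herg A ⟨hA.1, hA.2, fun B hBA hB hBi => or_iff_not_imp_left.2 fun hB0 => ?_⟩)
  have hBinv : MeasurableSet[hinv.invariants] B := ⟨hB, hBi⟩
  simpa only [htrim hBinv, htrim hA] using hatom B hBA hBinv (by rwa [htrim hBinv])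

end Invariant

/-- if `μ` is an invariant probability measure for a Markov kernel `p` and
every `(μ,p)`-ergodic set is `μ`-null, then every invariant set `F` contains an invariant
subset `F′` with `μ(F)/4 ≤ μ(F′) ≤ μ(F)/2`. -/
theorem exists_half_invariant_subset
    {S : Type*} [MeasurableSpace S] (p : Kernel S S) (hp : IsMarkovKernel p)
    (μ : Measure S) (hμ : IsProbabilityMeasure μ)
    (hinv : KInvariantMeasure μ (fun x => p x))
    (herg : ∀ G : Set S, KErgodicSet μ (fun x => p x) G → μ G = 0) :
    ∀ F : Set S, MeasurableSet F → KInvariantSet μ (fun x => p x) F →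
      ∃ F' : Set S, MeasurableSet F' ∧ F' ⊆ F ∧ KInvariantSet μ (fun x => p x) F' ∧
        μ F / 4 ≤ μ F' ∧ μ F' ≤ μ F / 2 := by
  intro F hF hFi
  have hFinv : MeasurableSet[hinv.invariants] F := ⟨hF, hFi⟩
  obtain ⟨F', hF'F, hF', hlow, hup⟩ :=
    (hinv.isAtomless_trim_invariants herg).exists_subset_measure_mem_Icc hFinv
  rw [trim_measurableSet_eq _ hFinv, trim_measurableSet_eq _ hF'] at hlow hup
  exact ⟨F', hF'.1, hF'F, hF'.2, hlow, hup⟩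
end
end
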